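/- Let r : ℝ → ℝ be continuous with 1 < r⁻ ≤ r(ξ) ≤ r⁺ < ∞ for all ξ, and set r'(ξ) := r(ξ)/(r(ξ)−1). Let S : ℝ × ℝ^{3×3}_sym → ℝ^{3×3}_sym be a continuous map satisfying, for positive constants C₁, C₂, C₃: (growth) |S(ξ,B)| ≤ C₁(|B|^{r(ξ)−1} + 1); (strict monotonicity) (S(ξ,B₁) − S(ξ,B₂)) · (B₁ − B₂) > 0 whenever B₁ ≠ B₂; (coercivity) S(ξ,B) · B ≥ C₂(|B|^{r(ξ)} + |S(ξ,B)|^{r'(ξ)}) − C₃. Let ξ_n → ξ in ℝ, let B ∈ ℝ^{3×3}_sym be fixed, and let (B_n) be a sequence in ℝ^{3×3}_sym such that (S(ξ_n, B_n) − S(ξ_n, B)) · (B_n − B) → 0 as n → ∞. Then B_n → B. -/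

import Mathlib

open Filter

/-- The Frobenius inner product of two `3×3` real matrices. -/
def frob (A B : Matrix (Fin 3) (Fin 3) ℝ) : ℝ := ∑ i, ∑ j, A i j * B i j

/-- The Frobenius norm of a `3×3` real matrix. -/
noncomputable def frobNorm (A : Matrix (Fin 3) (Fin 3) ℝ) : ℝ :=
  Real.sqrt (∑ i, ∑ j, (A i j) ^ 2)

/-!
Coercivity, the growth bound and the Cauchy–Schwarz inequality give
`C₂ |B_n|^{r(ξ_n)} ≤ a |B_n|^{r(ξ_n) - 1} + k |B_n| + d` with constants independent of `n`;
since `r(ξ_n) ≥ r⁻ > 1`, this bounds `(B_n)`. The bounded symmetric matrices form a compact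
set, and by continuity every cluster point `A` of `(B_n)` satisfies
`(S(ξ,A) − S(ξ,B)) · (A − B) = 0`, so `A = B` by strict monotonicity.
-/

abbrev Mat3 := Matrix (Fin 3) (Fin 3) ℝ

instance : FirstCountableTopology Mat3 :=
  inferInstanceAs (FirstCountableTopology (Fin 3 → Fin 3 → ℝ))

lemma frobNorm_nonneg (A : Mat3) : 0 ≤ frobNorm A :=
  Real.sqrt_nonneg _

lemma frob_sub_left (A B C : Mat3) : frob (A - B) C = frob A C - frob B C := by
  simp only [frob, Matrix.sub_apply, sub_mul, Finset.sum_sub_distrib]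

lemma frob_sub_right (A B C : Mat3) : frob A (B - C) = frob A B - frob A C := by
  simp only [frob, Matrix.sub_apply, mul_sub, Finset.sum_sub_distrib]

lemma abs_frob_le_frobNorm_mul (A B : Mat3) : |frob A B| ≤ frobNorm A * frobNorm B := by
  have hcs := Finset.sum_mul_sq_le_sq_mul_sq Finset.univ
    (fun p : Fin 3 × Fin 3 => A p.1 p.2) (fun p : Fin 3 × Fin 3 => B p.1 p.2)
  simp only [Fintype.sum_prod_type] at hcs
  rw [frobNorm, frobNorm, ← Real.sqrt_mul (by positivity)]
  exact Real.abs_le_sqrt hcs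

lemma abs_apply_le_frobNorm (A : Mat3) (i j : Fin 3) : |A i j| ≤ frobNorm A := by
  rw [← Real.sqrt_sq_eq_abs, frobNorm]
  refine Real.sqrt_le_sqrt ?_
  calc A i j ^ 2 ≤ ∑ j', A i j' ^ 2 :=
        Finset.single_le_sum (fun _ _ => sq_nonneg _) (Finset.mem_univ j)
    _ ≤ ∑ i', ∑ j', A i' j' ^ 2 :=
        Finset.single_le_sum (f := fun i' => ∑ j', A i' j' ^ 2)
          (fun _ _ => by positivity) (Finset.mem_univ i)

lemma continuous_frob : Continuous fun p : Mat3 × Mat3 => frob p.1 p.2 := by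
  unfold frob
  fun_prop

lemma continuous_frobNorm : Continuous frobNorm := by
  unfold frobNorm
  fun_prop

lemma isCompact_setOf_isSymm_frobNorm_le (M : ℝ) :
    IsCompact {A : Mat3 | A.IsSymm ∧ frobNorm A ≤ M} := by
  have hbox : IsCompact
      (Set.univ.pi fun _ : Fin 3 => Set.univ.pi fun _ : Fin 3 => Set.Icc (-M) M) :=
    isCompact_univ_pi fun _ => isCompact_univ_pi fun _ => isCompact_Icc
  refine hbox.of_isClosed_subset ?_ ?_
  · exact (isClosed_eq continuous_id.matrix_transpose continuous_id).inter
      (isClosed_le continuous_frobNorm continuous_const)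
  · rintro A ⟨-, hA⟩ i - j -
    exact abs_le.mp ((abs_apply_le_frobNorm A i j).trans hA)

lemma exists_le_of_mul_rpow_le {c ρ₀ : ℝ} (hc : 0 < c) (hρ₀ : 1 < ρ₀) (a k d : ℝ) :
    ∃ M, ∀ x ρ : ℝ, 0 ≤ x → ρ₀ ≤ ρ → c * x ^ ρ ≤ a * x ^ (ρ - 1) + k * x + d → x ≤ M := by
  set q := 2 * (|k| + |d|) / c
  refine ⟨max (max 1 (2 * a / c)) (q ^ (ρ₀ - 1)⁻¹), fun x ρ hx hρ h => ?_⟩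
  by_contra! hgt
  simp only [max_lt_iff] at hgt
  obtain ⟨⟨hx1, hxa⟩, hxq⟩ := hgt
  have hx0 : 0 < x := one_pos.trans hx1
  have hxρ : x ^ ρ = x * x ^ (ρ - 1) := by
    rw [Real.rpow_sub_one hx0.ne', mul_div_cancel₀ _ hx0.ne']
  have hcx : c * x / 2 ≤ c * x - a := by
    rw [div_lt_iff₀ hc] at hxa
    linarith
  have hpow_nonneg : 0 ≤ x ^ (ρ - 1) := Real.rpow_nonneg hx _
  -- `c x / 2 * x ^ (ρ - 1) ≤ (|k| + |d|) x`, then divide by `x`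
  have hpow_le : x ^ (ρ - 1) ≤ q := by
    rw [le_div_iff₀ hc]
    have hkd : k * x + d ≤ (|k| + |d|) * x := by
      nlinarith [le_abs_self k, le_abs_self d, abs_nonneg d]
    nlinarith [mul_le_mul_of_nonneg_right hcx hpow_nonneg]
  have hpow₀ : x ^ (ρ₀ - 1) ≤ q :=
    (Real.rpow_le_rpow_of_exponent_le hx1.le (by linarith)).trans hpow_le
  have hq : 0 ≤ q := (Real.rpow_nonneg hx _).trans hpow₀
  exact hxq.not_ge ((Real.le_rpow_inv_iff_of_pos hx hq (by linarith)).mpr hpow₀)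

lemma mul_frobNorm_rpow_le {T : Mat3 → Mat3} {X B : Mat3} {ρ C₁ C₂ C₃ K E : ℝ} (hC₂ : 0 ≤ C₂)
    (hgrowth : frobNorm (T X) ≤ C₁ * (frobNorm X ^ (ρ - 1) + 1))
    (hcoer : C₂ * (frobNorm X ^ ρ + frobNorm (T X) ^ (ρ / (ρ - 1))) - C₃ ≤ frob (T X) X)
    (hK : frobNorm (T B) ≤ K) (hE : frob (T X - T B) (X - B) ≤ E) :
    C₂ * frobNorm X ^ ρ ≤ C₁ * frobNorm B * frobNorm X ^ (ρ - 1) + K * frobNorm X +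
      (E + C₁ * frobNorm B + K * frobNorm B + C₃) := by
  have hsplit : frob (T X) X =
      frob (T X - T B) (X - B) + frob (T X) B + frob (T B) X - frob (T B) B := by
    simp only [frob_sub_left, frob_sub_right]
    ring
  have hCS := abs_frob_le_frobNorm_mul
  have hb := frobNorm_nonneg B
  have hTXB : frob (T X) B ≤ C₁ * (frobNorm X ^ (ρ - 1) + 1) * frobNorm B :=
    (le_abs_self _).trans ((hCS _ _).trans (mul_le_mul_of_nonneg_right hgrowth hb))
  have hTBX : frob (T B) X ≤ K * frobNorm X :=
    (le_abs_self _).trans ((hCS _ _).trans (mul_le_mul_of_nonneg_right hK (frobNorm_nonneg X)))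
  have hTBB : -frob (T B) B ≤ K * frobNorm B :=
    (neg_le_abs _).trans ((hCS _ _).trans (mul_le_mul_of_nonneg_right hK hb))
  have hS : 0 ≤ C₂ * frobNorm (T X) ^ (ρ / (ρ - 1)) :=
    mul_nonneg hC₂ (Real.rpow_nonneg (frobNorm_nonneg _) _)
  linarith

theorem monotone_stress_convergence_general
    (r : ℝ → ℝ) (rm rp : ℝ) (hrm : 1 < rm)
    (hbd : ∀ ξ : ℝ, rm ≤ r ξ ∧ r ξ ≤ rp)
    (S : ℝ → Matrix (Fin 3) (Fin 3) ℝ → Matrix (Fin 3) (Fin 3) ℝ)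
    (hScont : Continuous fun p : ℝ × Matrix (Fin 3) (Fin 3) ℝ => S p.1 p.2)
    (C₁ C₂ C₃ : ℝ) (hC₂ : 0 < C₂)
    (hgrowth : ∀ (ξ : ℝ) (B : Matrix (Fin 3) (Fin 3) ℝ), B.IsSymm →
      frobNorm (S ξ B) ≤ C₁ * (frobNorm B ^ (r ξ - 1) + 1))
    (hmono : ∀ (ξ : ℝ) (B₁ B₂ : Matrix (Fin 3) (Fin 3) ℝ), B₁.IsSymm → B₂.IsSymm →
      B₁ ≠ B₂ → 0 < frob (S ξ B₁ - S ξ B₂) (B₁ - B₂))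
    (hcoer : ∀ (ξ : ℝ) (B : Matrix (Fin 3) (Fin 3) ℝ), B.IsSymm →
      C₂ * (frobNorm B ^ (r ξ) + frobNorm (S ξ B) ^ (r ξ / (r ξ - 1))) - C₃ ≤
        frob (S ξ B) B)
    (ξseq : ℕ → ℝ) (ξ : ℝ) (hξ : Tendsto ξseq atTop (nhds ξ))
    (B : Matrix (Fin 3) (Fin 3) ℝ) (hB : B.IsSymm)
    (Bseq : ℕ → Matrix (Fin 3) (Fin 3) ℝ) (hBseq : ∀ n, (Bseq n).IsSymm)
    (hconv : Tendsto
      (fun n => frob (S (ξseq n) (Bseq n) - S (ξseq n) B) (Bseq n - B)) atTop (nhds 0)) :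
    Tendsto Bseq atTop (nhds B) := by
  have hpairing : Continuous fun p : ℝ × Mat3 => frob (S p.1 p.2 - S p.1 B) (p.2 - B) :=
    continuous_frob.comp ((hScont.sub (hScont.comp (continuous_fst.prodMk continuous_const))).prodMk
      (continuous_snd.sub continuous_const))
  obtain ⟨K, hK⟩ := ((continuous_frobNorm.tendsto _).comp
    ((hScont.tendsto (ξ, B)).comp (hξ.prodMk_nhds tendsto_const_nhds))).bddAbove_range
  obtain ⟨E, hE⟩ := hconv.bddAbove_range
  obtain ⟨M, hM⟩ := exists_le_of_mul_rpow_le hC₂ hrm (C₁ * frobNorm B) K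
    (E + C₁ * frobNorm B + K * frobNorm B + C₃)
  have hbounded : ∀ n, frobNorm (Bseq n) ≤ M := fun n =>
    hM _ _ (frobNorm_nonneg _) (hbd _).1 <| mul_frobNorm_rpow_le hC₂.le
      (hgrowth _ _ (hBseq n)) (hcoer _ _ (hBseq n)) (hK ⟨n, rfl⟩) (hE ⟨n, rfl⟩)
  refine (isCompact_setOf_isSymm_frobNorm_le M).tendsto_nhds_of_unique_mapClusterPt
    (Eventually.of_forall fun n => ⟨hBseq n, hbounded n⟩) ?_
  rintro A ⟨hA, -⟩ hcluster
  obtain ⟨ψ, hψ, hBψ⟩ := hcluster.tendsto_subseq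
  have hzero : frob (S ξ A - S ξ B) (A - B) = 0 :=
    tendsto_nhds_unique ((hpairing.tendsto (ξ, A)).comp
      ((hξ.comp hψ.tendsto_atTop).prodMk_nhds hBψ)) (hconv.comp hψ.tendsto_atTop)
  by_contra hne
  exact (hmono ξ A B hA hB hne).ne' hzero

/-- For a stress tensor `S(ξ,B)` satisfying growth, strict monotonicity and coercivity with a
continuous variable exponent `r` (with `1 < r⁻ ≤ r ≤ r⁺ < ∞`): if `ξ_n → ξ`, `B` is a fixed
symmetric matrix and `(B_n)` is a sequence of symmetric matrices with
`(S(ξ_n,B_n) − S(ξ_n,B)) · (B_n − B) → 0`, then `B_n → B`. -/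
theorem monotone_stress_convergence
    (r : ℝ → ℝ) (hrcont : Continuous r) (rm rp : ℝ) (hrm : 1 < rm)
    (hbd : ∀ ξ : ℝ, rm ≤ r ξ ∧ r ξ ≤ rp)
    (S : ℝ → Matrix (Fin 3) (Fin 3) ℝ → Matrix (Fin 3) (Fin 3) ℝ)
    (hScont : Continuous fun p : ℝ × Matrix (Fin 3) (Fin 3) ℝ => S p.1 p.2)
    (C₁ C₂ C₃ : ℝ) (hC₁ : 0 < C₁) (hC₂ : 0 < C₂) (hC₃ : 0 < C₃)
    (hgrowth : ∀ (ξ : ℝ) (B : Matrix (Fin 3) (Fin 3) ℝ), B.IsSymm →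
      frobNorm (S ξ B) ≤ C₁ * (frobNorm B ^ (r ξ - 1) + 1))
    (hmono : ∀ (ξ : ℝ) (B₁ B₂ : Matrix (Fin 3) (Fin 3) ℝ), B₁.IsSymm → B₂.IsSymm →
      B₁ ≠ B₂ → 0 < frob (S ξ B₁ - S ξ B₂) (B₁ - B₂))
    (hcoer : ∀ (ξ : ℝ) (B : Matrix (Fin 3) (Fin 3) ℝ), B.IsSymm →
      C₂ * (frobNorm B ^ (r ξ) + frobNorm (S ξ B) ^ (r ξ / (r ξ - 1))) - C₃ ≤
        frob (S ξ B) B)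
    (ξseq : ℕ → ℝ) (ξ : ℝ) (hξ : Tendsto ξseq atTop (nhds ξ))
    (B : Matrix (Fin 3) (Fin 3) ℝ) (hB : B.IsSymm)
    (Bseq : ℕ → Matrix (Fin 3) (Fin 3) ℝ) (hBseq : ∀ n, (Bseq n).IsSymm)
    (hconv : Tendsto
      (fun n => frob (S (ξseq n) (Bseq n) - S (ξseq n) B) (Bseq n - B)) atTop (nhds 0)) :
    Tendsto Bseq atTop (nhds B) :=
  monotone_stress_convergence_general r rm rp hrm hbd S hScont C₁ C₂ C₃ hC₂ hgrowth hmono hcoer ξseq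
    ξ hξ B hB Bseq hBseq hconv
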